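/- arXiv:2103.01326 — 3 statements merged into one kernel-verified Lean document; each statement's English description precedes it below -/
import Mathlib

section
/- Let k be a field, A a finite-dimensional k-algebra, and t : A → k a k-linear map satisfying t(ab) = t(ba) for all a, b ∈ A. Suppose the bilinear form ⟨a,b⟩ = t(ab) is nondegenerate and anisotropic (i.e. t(a²) = 0 implies a = 0). Then A is a semisimple ring. -/
/-! Anisotropy makes `A` reduced, since `a * a = 0` forces `t (a * a) = 0`. Being
finite-dimensional, `A` is Artinian, so its Jacobson radical is nilpotent and hence zero in a
reduced ring; an Artinian ring with zero Jacobson radical is semisimple. -/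

theorem isReduced_of_map_mul_self_eq_zero {A M F : Type*} [Ring A] [Zero M] [FunLike F A M]
    [ZeroHomClass F A M] (t : F) (han : ∀ a : A, t (a * a) = 0 → a = 0) : IsReduced A :=
  (isReduced_iff_pow_one_lt 2 one_lt_two).mpr fun a ha =>
    han a (by rw [← sq, ha, map_zero])

theorem isSemisimpleRing_of_isArtinianRing_of_isReduced (R : Type*) [Ring R] [IsArtinianRing R]
    [IsReduced R] : IsSemisimpleRing R := by
  refine IsArtinianRing.isSemisimpleRing_iff_jacobson.mpr (eq_bot_iff.mpr fun x hx => ?_)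
  obtain ⟨n, hn⟩ := IsSemiprimaryRing.isNilpotent (R := R)
  exact IsReduced.eq_zero x ⟨n, by simpa [hn] using Ideal.pow_mem_pow hx n⟩

theorem stmt6_general {k A : Type*} [Field k] [Ring A] [Algebra k A]
    [FiniteDimensional k A] (t : A →ₗ[k] k)
    (han : ∀ a : A, t (a * a) = 0 → a = 0) :
    IsSemisimpleRing A :=
  have : IsReduced A := isReduced_of_map_mul_self_eq_zero t han
  have : IsArtinianRing A := .of_finite k A
  isSemisimpleRing_of_isArtinianRing_of_isReduced A

theorem stmt6 {k A : Type*} [Field k] [Ring A] [Algebra k A]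
    [FiniteDimensional k A] (t : A →ₗ[k] k)
    (htr : ∀ a b : A, t (a * b) = t (b * a))
    (hnd : ∀ a : A, (∀ b : A, t (a * b) = 0) → a = 0)
    (han : ∀ a : A, t (a * a) = 0 → a = 0) :
    IsSemisimpleRing A :=
  stmt6_general t han
end

section
/- Let K be a field and let V, M, N be K-vector spaces with a K-bilinear map π : V × M → N. Suppose that for every nonzero v ∈ V there exist a linear map φ : N → M and a linear functional ψ : V → K such that ψ(v) = 1 and φ(π(u, m)) = ψ(u)·m for all u ∈ V and m ∈ M. Then the induced linear map V ⊗_K M → N is injective. -/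
/-!
Write `x ∈ V ⊗ M` as `∑ bᵢ ⊗ eᵢ` over a basis `(eᵢ)` of `M`. If `x ≠ 0`, some `v = bᵢ` is nonzero, and
the `φ` attached to `v` sends the image of `x` in `N` to `∑ ψ(bⱼ) • eⱼ`, whose `i`-th coordinate is
`ψ v = 1`; so that image is nonzero.
-/

open TensorProduct

namespace TensorProduct

variable {R V M N ι : Type*} [CommRing R]
  [AddCommGroup V] [Module R V] [AddCommGroup M] [Module R M] [AddCommGroup N] [Module R N]

theorem comp_lift_eq_lid_comp_rTensor {π : V →ₗ[R] M →ₗ[R] N} {φ : N →ₗ[R] M} {ψ : V →ₗ[R] R}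
    (hφ : ∀ u m, φ (π u m) = ψ u • m) :
    φ ∘ₗ lift π = (TensorProduct.lid R M).toLinearMap ∘ₗ ψ.rTensor M := by
  ext u m
  simp [hφ]

theorem repr_lid_rTensor [DecidableEq ι] (𝒞 : Module.Basis ι R M) (ψ : V →ₗ[R] R)
    (x : V ⊗[R] M) (i : ι) :
    𝒞.repr (TensorProduct.lid R M (ψ.rTensor M x)) i = ψ (equivFinsuppOfBasisRight 𝒞 x i) := by
  induction x using TensorProduct.induction_on with
  | zero => simp
  | tmul v m => simp [mul_comm]
  | add x y hx hy => simp [hx, hy]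

theorem exists_ne_zero_forall_lid_rTensor_ne_zero [Nontrivial R] [Module.Free R M]
    {x : V ⊗[R] M} (hx : x ≠ 0) :
    ∃ v : V, v ≠ 0 ∧ ∀ ψ : V →ₗ[R] R, ψ v = 1 → TensorProduct.lid R M (ψ.rTensor M x) ≠ 0 := by
  classical
  let 𝒞 := Module.Free.chooseBasis R M
  obtain ⟨i, hi⟩ : ∃ i, equivFinsuppOfBasisRight 𝒞 x i ≠ 0 :=
    Finsupp.ne_iff.mp ((LinearEquiv.map_ne_zero_iff _).mpr hx)
  refine ⟨_, hi, fun ψ hψ h0 => ?_⟩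
  have hcoord := repr_lid_rTensor 𝒞 ψ x i
  rw [h0, hψ] at hcoord
  simp at hcoord

end TensorProduct

theorem stmt7 {K V M N : Type*} [Field K]
    [AddCommGroup V] [Module K V] [AddCommGroup M] [Module K M]
    [AddCommGroup N] [Module K N]
    (π : V →ₗ[K] M →ₗ[K] N)
    (h : ∀ v : V, v ≠ 0 → ∃ (φ : N →ₗ[K] M) (ψ : V →ₗ[K] K),
      ψ v = 1 ∧ ∀ (u : V) (m : M), φ (π u m) = ψ u • m) :
    Function.Injective (TensorProduct.lift π) := by
  rw [injective_iff_map_eq_zero]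
  intro x hx
  by_contra hx0
  obtain ⟨v, hv, hcontract⟩ := exists_ne_zero_forall_lid_rTensor_ne_zero hx0
  obtain ⟨φ, ψ, hψv, hφ⟩ := h v hv
  apply hcontract ψ hψv
  simpa [hx] using (LinearMap.congr_fun (comp_lift_eq_lid_comp_rTensor hφ) x).symm
end

section
/- Let k be a field and A a finite-dimensional commutative k-algebra with a linear map t : A → k such that the bilinear form ⟨a,b⟩ = t(ab) is nondegenerate and anisotropic. Then A is a semisimple ring, and in fact A is a finite product of field extensions of k. -/
universe u v

/-!
Anisotropy gives `a ^ 2 = 0 → a = 0`, so `A` is reduced; being finite-dimensional it is Artinian.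
A reduced Artinian ring is, by the Chinese remainder theorem, the product of its residue fields
at its finitely many maximal ideals.
-/

theorem isReduced_of_anisotropic {k A : Type*} [CommSemiring k] [Semiring A] [Module k A]
    (t : A →ₗ[k] k) (han : ∀ a : A, t (a * a) = 0 → a = 0) : IsReduced A :=
  (isReduced_iff_pow_one_lt 2 one_lt_two).2 fun a ha => han a (by rw [← sq, ha, map_zero])

theorem IsArtinianRing.exists_algEquiv_pi_field {R : Type u} {A : Type v} [CommRing R] [CommRing A]
    [Algebra R A] [IsArtinianRing A] [IsReduced A] :
    ∃ (n : ℕ) (K : Fin n → Type (max u v)) (_ : ∀ i, Field (K i)) (_ : ∀ i, Algebra R (K i)),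
      Nonempty (A ≃ₐ[R] ∀ i, K i) := by
  let e := (Finite.equivFin (MaximalSpectrum A)).symm
  let _ : ∀ i, Field (A ⧸ (e i).asIdeal) := fun i => Ideal.Quotient.field _
  refine ⟨_, fun i => ULift.{u} (A ⧸ (e i).asIdeal), fun _ => ULift.field, fun _ => inferInstance,
    ⟨?_⟩⟩
  exact ((IsArtinianRing.equivPi A).restrictScalars R).trans <|
    (AlgEquiv.piCongrLeft R (fun m : MaximalSpectrum A => A ⧸ m.asIdeal) e).symm.trans <|
      AlgEquiv.piCongrRight fun _ => ULift.algEquiv.symm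

theorem stmt16_general {k : Type u} {A : Type v} [Field k] [CommRing A] [Algebra k A]
    [FiniteDimensional k A] (t : A →ₗ[k] k)
    (han : ∀ a : A, t (a * a) = 0 → a = 0) :
    IsSemisimpleRing A ∧
      ∃ (n : ℕ) (K : Fin n → Type (max u v)) (_ : ∀ i, Field (K i))
        (_ : ∀ i, Algebra k (K i)),
        Nonempty (A ≃ₐ[k] ∀ i, K i) := by
  have : IsReduced A := isReduced_of_anisotropic t han
  have : IsArtinianRing A := .of_finite k A
  exact ⟨IsArtinianRing.isSemisimpleRing_of_isReduced A, IsArtinianRing.exists_algEquiv_pi_field⟩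

theorem stmt16 {k : Type u} {A : Type v} [Field k] [CommRing A] [Algebra k A]
    [FiniteDimensional k A] (t : A →ₗ[k] k)
    (hnd : ∀ a : A, (∀ b : A, t (a * b) = 0) → a = 0)
    (han : ∀ a : A, t (a * a) = 0 → a = 0) :
    IsSemisimpleRing A ∧
      ∃ (n : ℕ) (K : Fin n → Type (max u v)) (_ : ∀ i, Field (K i))
        (_ : ∀ i, Algebra k (K i)),
        Nonempty (A ≃ₐ[k] ∀ i, K i) :=
  stmt16_general t han
end
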